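/- Fix integers d ≥ 2 and j0 ≥ 0 and a real M ≥ 2. For each integer j ≥ j0, let ∇_j be a finite set, the sets ∇_j being pairwise disjoint, with 2^{j−1} ≤ #∇_j ≤ M·2^{j−1}. For an integer ℓ ≥ d·j0, let J_ℓ = {(j_1,…,j_d) ∈ ℤ^d : j_k ≥ j0 for all k, j_1+…+j_d = ℓ} and U∇(ℓ) = ⋃_{(j_1,…,j_d)∈J_ℓ} ∇_{j_1}×…×∇_{j_d}, the union being disjoint. Then for every ℓ ≥ d·j0: 2^{−d}·(d−1)^{−(d−1)}·(ℓ − d·j0 + d − 1)^{d−1}·2^ℓ ≤ #U∇(ℓ) ≤ (M/2)^d·(e/(d−1))^{d−1}·(ℓ − d·j0 + d − 1)^{d−1}·2^ℓ. -/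

import Mathlib

/-!
`U∇(ℓ)` is the disjoint union, over `(j₁, …, j_d) ∈ J_ℓ`, of the boxes `∇_{j₁} × ⋯ × ∇_{j_d}`,
and since `j₁ + ⋯ + j_d = ℓ` each box has between `2^ℓ / 2^d` and `(M/2)^d 2^ℓ` elements.
Shifting every `j_k` by `j₀` and counting by stars and bars gives `#J_ℓ = C(m, k)` with
`m = ℓ - d j₀ + d - 1` and `k = d - 1`, and `m^k / k^k ≤ C(m, k) ≤ (e m / k)^k`.
-/

open Finset

open scoped Nat

namespace Nat

theorem pow_le_pow_mul_choose {m k : ℕ} (h : k ≤ m) : m ^ k ≤ k ^ k * m.choose k := by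
  have key : ∏ i ∈ range k, m * (k - i) ≤ ∏ i ∈ range k, k * (m - i) :=
    prod_le_prod' fun i _ ↦ by
      rw [Nat.mul_sub, Nat.mul_sub, mul_comm k m]
      exact Nat.sub_le_sub_left (Nat.mul_le_mul_right i h) _
  -- the two sides are `m ^ k * k !` and `k ^ k * m.descFactorial k`
  simp only [prod_mul_distrib, prod_const, card_range, ← descFactorial_eq_prod_range,
    descFactorial_self, descFactorial_eq_factorial_mul_choose] at key
  refine Nat.le_of_mul_le_mul_right ?_ k.factorial_pos
  linarith

theorem cast_pow_div_pow_le_choose {m k : ℕ} (h : k ≤ m) :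
    (m : ℝ) ^ k / (k : ℝ) ^ k ≤ m.choose k := by
  rw [div_le_iff₀ (mod_cast Nat.pow_self_pos), mul_comm]
  exact_mod_cast pow_le_pow_mul_choose h

theorem cast_choose_le_exp_mul_div_pow (m k : ℕ) :
    (m.choose k : ℝ) ≤ (Real.exp 1 * m / k) ^ k := by
  have hk : (0 : ℝ) < (k : ℝ) ^ k := mod_cast Nat.pow_self_pos
  have hfact : (k : ℝ) ^ k ≤ Real.exp 1 ^ k * k ! := by
    rw [Real.exp_one_pow, ← div_le_iff₀ (by positivity)]
    exact Real.pow_div_factorial_le_exp (x := k) k.cast_nonneg k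
  calc (m.choose k : ℝ) ≤ (m : ℝ) ^ k / k ! := choose_le_pow_div k m
    _ ≤ Real.exp 1 ^ k * m ^ k / k ^ k := by
      rw [div_le_div_iff₀ (by positivity) hk]
      nlinarith [pow_nonneg (m.cast_nonneg (α := ℝ)) k]
    _ = (Real.exp 1 * m / k) ^ k := by rw [div_pow, mul_pow]

end Nat

theorem card_eq_choose_of_mem_iff {ι : Type*} [Fintype ι] {j0 n : ℕ} (J : Finset (ι → ℕ))
    (hJ : ∀ v, v ∈ J ↔ (∀ i, j0 ≤ v i) ∧ ∑ i, v i = n + Fintype.card ι * j0) :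
    #J = (Fintype.card ι + n - 1).choose n := by
  classical
  have sum_shift (P : ι → ℕ) : ∑ i, (P i + j0) = ∑ i, P i + Fintype.card ι * j0 := by
    simp [sum_add_distrib]
  let e : J ≃ {P : ι → ℕ // ∑ i, P i = n} :=
    { toFun v := ⟨fun i ↦ v.1 i - j0, by
        obtain ⟨hge, hsum⟩ := (hJ v).1 v.2
        have := sum_shift fun i ↦ v.1 i - j0
        simp only [Nat.sub_add_cancel (hge _), hsum] at this
        exact (Nat.add_right_cancel this).symm⟩
      invFun P := ⟨fun i ↦ P.1 i + j0, (hJ _).2 ⟨fun _ ↦ Nat.le_add_left _ _, by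
        rw [sum_shift, P.2]⟩⟩
      left_inv v := Subtype.ext <| funext fun i ↦ Nat.sub_add_cancel (((hJ v).1 v.2).1 i)
      right_inv P := Subtype.ext <| funext fun i ↦ Nat.add_sub_cancel _ _ }
  rw [← Fintype.card_coe, Fintype.card_congr (e.trans (Sym.equivNatSumOfFintype ι n).symm),
    Sym.card_sym_eq_choose]

theorem pow_card_mul_pow_sum_le_prod {ι : Type*} [Fintype ι] {x : ι → ℝ} {n : ι → ℕ}
    {a r : ℝ} (ha : 0 ≤ a) (hr : 0 ≤ r) (h : ∀ i, a * r ^ n i ≤ x i) :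
    a ^ Fintype.card ι * r ^ ∑ i, n i ≤ ∏ i, x i := by
  calc a ^ Fintype.card ι * r ^ ∑ i, n i = ∏ i, a * r ^ n i := by
        rw [prod_mul_distrib, prod_const, prod_pow_eq_pow_sum, card_univ]
    _ ≤ ∏ i, x i := prod_le_prod (fun i _ ↦ by positivity) fun i _ ↦ h i

theorem prod_le_pow_card_mul_pow_sum {ι : Type*} [Fintype ι] {x : ι → ℝ} {n : ι → ℕ}
    {b r : ℝ} (hx : ∀ i, 0 ≤ x i) (h : ∀ i, x i ≤ b * r ^ n i) :
    ∏ i, x i ≤ b ^ Fintype.card ι * r ^ ∑ i, n i := by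
  calc ∏ i, x i ≤ ∏ i, b * r ^ n i := prod_le_prod (fun i _ ↦ hx i) fun i _ ↦ h i
    _ = b ^ Fintype.card ι * r ^ ∑ i, n i := by
        rw [prod_mul_distrib, prod_const, prod_pow_eq_pow_sum, card_univ]

theorem prod_card_mem_Icc_of_zpow_bounds {ι α : Type*} [Fintype ι] {s : ι → Finset α}
    {v : ι → ℕ} {M : ℝ}
    (h : ∀ i, (2 : ℝ) ^ ((v i : ℤ) - 1) ≤ #(s i) ∧ (#(s i) : ℝ) ≤ M * 2 ^ ((v i : ℤ) - 1)) :
    ∏ i, (#(s i) : ℝ) ∈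
      Set.Icc ((2⁻¹) ^ Fintype.card ι * 2 ^ ∑ i, v i) ((M / 2) ^ Fintype.card ι * 2 ^ ∑ i, v i) := by
  have h' i : 2⁻¹ * 2 ^ v i ≤ (#(s i) : ℝ) ∧ (#(s i) : ℝ) ≤ M / 2 * 2 ^ v i := by
    have h2 : (2 : ℝ) ^ ((v i : ℤ) - 1) = 2⁻¹ * 2 ^ v i := by
      rw [zpow_sub_one₀ two_ne_zero, zpow_natCast, mul_comm]
    rw [div_mul_eq_mul_div, mul_div_assoc, ← inv_mul_eq_div, ← h2]
    exact h i
  exact ⟨pow_card_mul_pow_sum_le_prod (by norm_num) zero_le_two fun i ↦ (h' i).1,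
    prod_le_pow_card_mul_pow_sum (fun i ↦ Nat.cast_nonneg _) fun i ↦ (h' i).2⟩

theorem card_eq_sum_prod_card_of_mem_iff {ι κ α : Type*} [Fintype ι] [DecidableEq ι]
    [DecidableEq α] {J : Finset (ι → κ)} {s : κ → Finset α} {T : Set κ}
    (hT : T.PairwiseDisjoint s) (hJT : ∀ v ∈ J, ∀ i, v i ∈ T) (U : Finset (ι → α))
    (hU : ∀ x, x ∈ U ↔ ∃ v ∈ J, ∀ i, x i ∈ s (v i)) :
    #U = ∑ v ∈ J, ∏ i, #(s (v i)) := by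
  have hUJ : U = J.biUnion fun v ↦ Fintype.piFinset fun i ↦ s (v i) := by
    ext x
    simp [hU]
  rw [hUJ, card_biUnion]
  · simp only [Fintype.card_piFinset]
  intro v hv w hw hvw
  obtain ⟨i, hi⟩ := Function.ne_iff.1 hvw
  exact Fintype.piFinset_disjoint_of_disjoint _ _ (hT (hJT v hv i) (hJT w hw i) hi)

theorem stmt3_general
    (d j0 : ℕ) (hd : 2 ≤ d) (M : ℝ)
    {Λ0 : Type*}
    (nabla : ℕ → Finset Λ0)
    (hdisj : ∀ j j', j0 ≤ j → j0 ≤ j' → j ≠ j' → Disjoint (nabla j) (nabla j'))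
    (hcard : ∀ j, j0 ≤ j →
      (2 : ℝ) ^ ((j : ℤ) - 1) ≤ ((nabla j).card : ℝ)
      ∧ ((nabla j).card : ℝ) ≤ M * (2 : ℝ) ^ ((j : ℤ) - 1))
    (JJ : ℕ → Finset (Fin d → ℕ))
    (hJJ : ∀ ℓ jv, jv ∈ JJ ℓ ↔ ((∀ k, j0 ≤ jv k) ∧ ∑ k, jv k = ℓ))
    (Unabla : ℕ → Finset (Fin d → Λ0))
    (hUnabla : ∀ ℓ lam, lam ∈ Unabla ℓ ↔ ∃ jv ∈ JJ ℓ, ∀ k, lam k ∈ nabla (jv k)) :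
    ∀ ℓ, d * j0 ≤ ℓ →
      ((ℓ : ℝ) - d * j0 + d - 1) ^ (d - 1) * 2 ^ ℓ / (2 ^ d * ((d : ℝ) - 1) ^ (d - 1))
          ≤ ((Unabla ℓ).card : ℝ)
      ∧ ((Unabla ℓ).card : ℝ)
          ≤ (M / 2) ^ d * (Real.exp 1 / ((d : ℝ) - 1)) ^ (d - 1)
            * ((ℓ : ℝ) - d * j0 + d - 1) ^ (d - 1) * 2 ^ ℓ := by
  classical
  intro ℓ hℓ
  obtain ⟨k, rfl⟩ : ∃ k, d = k + 1 := ⟨d - 1, by omega⟩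
  obtain ⟨n, hn⟩ : ∃ n, ℓ = n + (k + 1) * j0 := ⟨ℓ - (k + 1) * j0, by omega⟩
  have hJ : #(JJ ℓ) = (n + k).choose k := by
    rw [card_eq_choose_of_mem_iff _ (by simpa [hn] using hJJ ℓ), Fintype.card_fin,
      add_right_comm, Nat.add_sub_cancel, add_comm k n, Nat.choose_symm_add]
  have hU : (#(Unabla ℓ) : ℝ) = ∑ v ∈ JJ ℓ, ∏ i, (#(nabla (v i)) : ℝ) := by
    have hpairwise : (Set.Ici j0).PairwiseDisjoint nabla := fun j hj j' hj' ↦ hdisj j j' hj hj'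
    exact_mod_cast card_eq_sum_prod_card_of_mem_iff hpairwise (fun v hv ↦ ((hJJ ℓ v).1 hv).1) _
      (hUnabla ℓ)
  have hbox (v) (hv : v ∈ JJ ℓ) : ∏ i, (#(nabla (v i)) : ℝ) ∈
      Set.Icc ((2⁻¹) ^ (k + 1) * 2 ^ ℓ) ((M / 2) ^ (k + 1) * 2 ^ ℓ) := by
    obtain ⟨hge, rfl⟩ := (hJJ _ v).1 hv
    simpa using prod_card_mem_Icc_of_zpow_bounds fun i ↦ hcard _ (hge i)
  have hM : 0 ≤ M := by
    have := hcard j0 le_rfl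
    exact nonneg_of_mul_nonneg_left (((zpow_pos two_pos _).le.trans this.1).trans this.2)
      (zpow_pos two_pos _)
  have hm : (ℓ : ℝ) - ↑(k + 1) * j0 + ↑(k + 1) - 1 = ((n + k : ℕ) : ℝ) := by
    rw [hn]; push_cast; ring
  have hk : ((k + 1 : ℕ) : ℝ) - 1 = k := by push_cast; ring
  rw [hm, hk, Nat.add_sub_cancel, hU]
  constructor
  · calc ((n + k : ℕ) : ℝ) ^ k * 2 ^ ℓ / (2 ^ (k + 1) * k ^ k)
          = ((n + k : ℕ) : ℝ) ^ k / k ^ k * ((2⁻¹) ^ (k + 1) * 2 ^ ℓ) := by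
            rw [inv_pow]; ring
      _ ≤ #(JJ ℓ) * ((2⁻¹) ^ (k + 1) * 2 ^ ℓ) := by
        rw [hJ]; gcongr; exact Nat.cast_pow_div_pow_le_choose (Nat.le_add_left k n)
      _ ≤ _ := by rw [← nsmul_eq_mul]; exact card_nsmul_le_sum _ _ _ fun v hv ↦ (hbox v hv).1
  · calc ∑ v ∈ JJ ℓ, ∏ i, (#(nabla (v i)) : ℝ) ≤ #(JJ ℓ) * ((M / 2) ^ (k + 1) * 2 ^ ℓ) := by
          rw [← nsmul_eq_mul]; exact sum_le_card_nsmul _ _ _ fun v hv ↦ (hbox v hv).2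
      _ ≤ (Real.exp 1 * (n + k : ℕ) / k) ^ k * ((M / 2) ^ (k + 1) * 2 ^ ℓ) := by
        rw [hJ]; gcongr; exact Nat.cast_choose_le_exp_mul_div_pow _ _
      _ = _ := by ring

/-- Cardinality bound for the hyperbolic index sets `U∇(ℓ)` (eq. (cardbignabla) in the
proof of Proposition 4):
`2^{−d}(d−1)^{−(d−1)}(ℓ−dj₀+d−1)^{d−1} 2^ℓ ≤ #U∇(ℓ) ≤ (M/2)^d (e/(d−1))^{d−1}(ℓ−dj₀+d−1)^{d−1} 2^ℓ`. -/
theorem stmt3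
    (d j0 : ℕ) (hd : 2 ≤ d) (M : ℝ) (hM : 2 ≤ M)
    {Λ0 : Type*} [DecidableEq Λ0]
    (nabla : ℕ → Finset Λ0)
    (hdisj : ∀ j j', j0 ≤ j → j0 ≤ j' → j ≠ j' → Disjoint (nabla j) (nabla j'))
    (hcard : ∀ j, j0 ≤ j →
      (2 : ℝ) ^ ((j : ℤ) - 1) ≤ ((nabla j).card : ℝ)
      ∧ ((nabla j).card : ℝ) ≤ M * (2 : ℝ) ^ ((j : ℤ) - 1))
    (JJ : ℕ → Finset (Fin d → ℕ))
    (hJJ : ∀ ℓ jv, jv ∈ JJ ℓ ↔ ((∀ k, j0 ≤ jv k) ∧ ∑ k, jv k = ℓ))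
    (Unabla : ℕ → Finset (Fin d → Λ0))
    (hUnabla : ∀ ℓ lam, lam ∈ Unabla ℓ ↔ ∃ jv ∈ JJ ℓ, ∀ k, lam k ∈ nabla (jv k)) :
    ∀ ℓ, d * j0 ≤ ℓ →
      ((ℓ : ℝ) - d * j0 + d - 1) ^ (d - 1) * 2 ^ ℓ / (2 ^ d * ((d : ℝ) - 1) ^ (d - 1))
          ≤ ((Unabla ℓ).card : ℝ)
      ∧ ((Unabla ℓ).card : ℝ)
          ≤ (M / 2) ^ d * (Real.exp 1 / ((d : ℝ) - 1)) ^ (d - 1)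
            * ((ℓ : ℝ) - d * j0 + d - 1) ^ (d - 1) * 2 ^ ℓ :=
  stmt3_general d j0 hd M nabla hdisj hcard JJ hJJ Unabla hUnabla
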